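/- arXiv:2509.20649 — 3 statements merged into one kernel-verified Lean document; each statement's English description precedes it below -/
import Mathlib

section
/- Suppose A, B, L ∈ ℂ^{n×n}, where A and B are diagonal invertible, and L is real symmetric positive semidefinite, and suppose there exist a, λ, Δ, d > 0 such that for all unit vectors x ∈ ℂ^n: Re(x* A x) ≥ a‖x‖², Re(x* L B x) ≥ d · d(x,N(L))² − λΔ · d(x,N(L))·‖x‖, and 4 a d > (λΔ)². Then Re(x*(A + LB)x) > 0 for all nonzero x ∈ ℂ^n, and hence A + LB is invertible. -/
open Matrix

/-- If `A`, `B` are diagonal invertible, `L` is real symmetric PSD, and there are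
`a, λ, Δ, d > 0` with `Re(x*Ax) ≥ a‖x‖²`,
`Re(x* L B x) ≥ d·d(x,N(L))² − λΔ·d(x,N(L))·‖x‖` for all unit `x`, and
`4ad > (λΔ)²`, then `Re(x*(A + LB)x) > 0` for all nonzero `x` and `A + LB` is
invertible. -/
theorem stmt_10 (n : ℕ) (A B : Matrix (Fin n) (Fin n) ℂ) (L : Matrix (Fin n) (Fin n) ℝ)
    (gA gB : Fin n → ℂ) (hA : A = Matrix.diagonal gA) (hB : B = Matrix.diagonal gB)
    (hAu : IsUnit A) (hBu : IsUnit B) (hL : L.PosSemidef)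
    (a lam Δ d : ℝ) (ha : 0 < a) (hlam : 0 < lam) (hΔ : 0 < Δ) (hd : 0 < d)
    (h1 : ∀ x : EuclideanSpace ℂ (Fin n), ‖x‖ = 1 →
      a * ‖x‖ ^ 2 ≤ (star (x : Fin n → ℂ) ⬝ᵥ (A *ᵥ (x : Fin n → ℂ))).re)
    (h2 : ∀ x : EuclideanSpace ℂ (Fin n), ‖x‖ = 1 →
      d * (Metric.infDist x
            ((LinearMap.ker (Matrix.toEuclideanLin (L.map (fun a : ℝ => (a : ℂ))))) :
              Set (EuclideanSpace ℂ (Fin n)))) ^ 2 -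
        lam * Δ *
          (Metric.infDist x
            ((LinearMap.ker (Matrix.toEuclideanLin (L.map (fun a : ℝ => (a : ℂ))))) :
              Set (EuclideanSpace ℂ (Fin n)))) * ‖x‖ ≤
        (star (x : Fin n → ℂ) ⬝ᵥ
          ((L.map (fun a : ℝ => (a : ℂ)) * B) *ᵥ (x : Fin n → ℂ))).re)
    (h3 : (lam * Δ) ^ 2 < 4 * a * d) :
    (∀ x : EuclideanSpace ℂ (Fin n), x ≠ 0 →
        0 < (star (x : Fin n → ℂ) ⬝ᵥ
          ((A + L.map (fun a : ℝ => (a : ℂ)) * B) *ᵥ (x : Fin n → ℂ))).re) ∧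
      IsUnit (A + L.map (fun a : ℝ => (a : ℂ)) * B) := by
  set M := A + L.map (fun a : ℝ => (a : ℂ)) * B with hM
  have key : ∀ x : EuclideanSpace ℂ (Fin n), x ≠ 0 →
      0 < (star (x : Fin n → ℂ) ⬝ᵥ (M *ᵥ (x : Fin n → ℂ))).re := by
    intro x hx
    have hnx : (0:ℝ) < ‖x‖ := norm_pos_iff.mpr hx
    set y : EuclideanSpace ℂ (Fin n) := (‖x‖ : ℝ)⁻¹ • x with hy
    have hyn : ‖y‖ = 1 := by
      rw [hy, norm_smul, norm_inv, norm_norm]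
      field_simp
    set D := Metric.infDist y
        ((LinearMap.ker (Matrix.toEuclideanLin (L.map (fun a : ℝ => (a : ℂ))))) :
          Set (EuclideanSpace ℂ (Fin n))) with hD
    have hD0 : 0 ≤ D := Metric.infDist_nonneg
    have e1 := h1 y hyn
    have e2 := h2 y hyn
    rw [hyn] at e1 e2
    have hposy : 0 < (star (y : Fin n → ℂ) ⬝ᵥ (M *ᵥ (y : Fin n → ℂ))).re := by
      have hsum : (star (y : Fin n → ℂ) ⬝ᵥ (M *ᵥ (y : Fin n → ℂ))).re
          = (star (y : Fin n → ℂ) ⬝ᵥ (A *ᵥ (y : Fin n → ℂ))).re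
            + (star (y : Fin n → ℂ) ⬝ᵥ
                ((L.map (fun a : ℝ => (a : ℂ)) * B) *ᵥ (y : Fin n → ℂ))).re := by
        rw [hM, Matrix.add_mulVec, dotProduct_add, Complex.add_re]
      rw [hsum]
      nlinarith [sq_nonneg (2*d*D - lam*Δ), e1, e2]
    set r : ℝ := ‖x‖ with hr
    have hr0 : (r : ℂ) ≠ 0 := by exact_mod_cast hnx.ne'
    have hx_eq : (x : Fin n → ℂ) = ((r : ℂ)) • (y : Fin n → ℂ) := by
      rw [hy]
      funext i
      show x i = (r : ℂ) * ((r⁻¹ : ℝ) • x) i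
      have hsi : ((r⁻¹ : ℝ) • x) i = ((r⁻¹ : ℝ) : ℂ) * x i := by
        simp [PiLp.smul_apply, Complex.real_smul]
      rw [hsi]
      push_cast
      field_simp
    have hQ : (star (x : Fin n → ℂ) ⬝ᵥ (M *ᵥ (x : Fin n → ℂ)))
        = ((r : ℂ) * (r : ℂ)) * (star (y : Fin n → ℂ) ⬝ᵥ (M *ᵥ (y : Fin n → ℂ))) := by
      rw [hx_eq, Matrix.mulVec_smul, star_smul, smul_dotProduct, dotProduct_smul]
      have : star ((r : ℂ)) = (r : ℂ) := by
        simp [Complex.star_def, Complex.conj_ofReal]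
      rw [this, smul_eq_mul, smul_eq_mul]
      ring
    rw [hQ]
    have hc : ((r : ℂ) * (r : ℂ)) = ((r * r : ℝ) : ℂ) := by push_cast; ring
    rw [hc, Complex.re_ofReal_mul]
    exact mul_pos (by positivity) hposy
  refine ⟨key, ?_⟩
  rw [Matrix.isUnit_iff_isUnit_det]
  by_contra h
  have hdet : M.det = 0 := by
    by_contra hd0
    exact h (isUnit_iff_ne_zero.mpr hd0)
  obtain ⟨v, hv, hMv⟩ := (Matrix.exists_mulVec_eq_zero_iff).mpr hdet
  have hpos : 0 < (star v ⬝ᵥ (M *ᵥ v)).re := key (WithLp.toLp 2 v) (by simpa using hv)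
  rw [show (M *ᵥ (v : Fin n → ℂ)) = 0 from hMv] at hpos
  simp at hpos
end

section
/- Let f(s) = (s² + k_p s + k_i)(τ s + 1)/((k_p s + k_i) D) with k_p, k_i, D, τ > 0 (grid-following control with frequency droop). Then there exists s ∈ ℂ with Re(s) ≥ 0 at which Re(f(s)) < 0; in particular, f restricted to the imaginary axis takes values with negative real part for sufficiently large frequency. -/
lemma aux16 (kp ki D τ ω : ℝ) (hkp : 0 < kp) (hki : 0 < ki) (hD : 0 < D)
    (hτ : 0 < τ) (h1 : 1 ≤ ω) (h2 : ki^2 + kp^2 + ki < kp*τ*ω^2) :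
    (((((ω : ℂ) * Complex.I) ^ 2 + (kp : ℂ) * ((ω : ℂ) * Complex.I) + ki) *
        ((τ : ℂ) * ((ω : ℂ) * Complex.I) + 1)) /
      (((kp : ℂ) * ((ω : ℂ) * Complex.I) + ki) * D)).re < 0 := by
  rw [Complex.div_re]
  simp [Complex.normSq_apply, Complex.mul_re, Complex.mul_im, Complex.add_re, Complex.add_im, pow_two]
  ring_nf
  have hx : (0:ℝ) < (ω ^ 2 * kp ^ 2 * D ^ 2 + ki ^ 2 * D ^ 2)⁻¹ := by positivity
  have hω : (1:ℝ) ≤ ω^2 := by nlinarith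
  have hω0 : (0:ℝ) < ω^2 := by linarith
  have h3 : (ki^2 + kp^2 + ki)*ω^2 < kp*τ*ω^2*ω^2 := mul_lt_mul_of_pos_right h2 hω0
  have h4 : ki^2 + kp^2*ω^2 - ki*ω^2 - kp*τ*ω^4 < 0 := by nlinarith
  have hnum : ki^2*D + ω^2*kp^2*D - ω^2*ki*D - ω^4*kp*τ*D < 0 := by
    nlinarith [mul_pos hD hω0]
  have key := mul_neg_of_neg_of_pos hnum hx
  refine lt_of_eq_of_lt ?_ key
  ring

/-- Grid-following control with frequency droop is not positive real: there is a
point in the closed right half-plane where `Re(f(s)) < 0`; in particular, on the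
imaginary axis `Re(f(jω)) < 0` for all sufficiently large `ω`. -/
theorem stmt_16 (kp ki D τ : ℝ) (hkp : 0 < kp) (hki : 0 < ki) (hD : 0 < D)
    (hτ : 0 < τ) :
    (∃ s : ℂ, 0 ≤ s.re ∧
        (((s ^ 2 + (kp : ℂ) * s + ki) * ((τ : ℂ) * s + 1)) /
          (((kp : ℂ) * s + ki) * D)).re < 0) ∧
      ∃ W : ℝ, ∀ ω : ℝ, W ≤ ω →
        (((((ω : ℂ) * Complex.I) ^ 2 + (kp : ℂ) * ((ω : ℂ) * Complex.I) + ki) *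
            ((τ : ℂ) * ((ω : ℂ) * Complex.I) + 1)) /
          (((kp : ℂ) * ((ω : ℂ) * Complex.I) + ki) * D)).re < 0 := by
  set K : ℝ := ki^2 + kp^2 + ki with hK
  set W : ℝ := max 1 (Real.sqrt (K / (kp * τ)) + 1) with hW
  have main : ∀ ω : ℝ, W ≤ ω →
      (((((ω : ℂ) * Complex.I) ^ 2 + (kp : ℂ) * ((ω : ℂ) * Complex.I) + ki) *
          ((τ : ℂ) * ((ω : ℂ) * Complex.I) + 1)) /
        (((kp : ℂ) * ((ω : ℂ) * Complex.I) + ki) * D)).re < 0 := by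
    intro ω hω
    have h1 : (1:ℝ) ≤ ω := le_trans (le_max_left _ _) hω
    have hs : Real.sqrt (K / (kp * τ)) < ω :=
      lt_of_lt_of_le (lt_of_lt_of_le (lt_add_one _) (le_max_right _ _)) hω
    have hsq : K / (kp * τ) < ω ^ 2 := by
      have := Real.sqrt_lt_sqrt (by positivity) (by
        nlinarith [Real.sq_sqrt (show (0:ℝ) ≤ K / (kp*τ) by positivity),
          Real.sqrt_nonneg (K / (kp*τ))] : K / (kp * τ) < ω ^ 2)
      exact by
        nlinarith [Real.sq_sqrt (show (0:ℝ) ≤ K / (kp*τ) by positivity),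
          Real.sqrt_nonneg (K / (kp*τ))]
    have h2 : ki^2 + kp^2 + ki < kp * τ * ω^2 := by
      have hkt : 0 < kp * τ := mul_pos hkp hτ
      have := (div_lt_iff₀ hkt).mp hsq
      rw [hK] at *
      nlinarith
    exact aux16 kp ki D τ ω hkp hki hD hτ h1 h2
  refine ⟨⟨(W : ℂ) * Complex.I, ?_, ?_⟩, W, main⟩
  · simp
  · simpa [pow_two] using main W le_rfl
end

section
/- With the setup of the previous block power-flow relation and additionally D_D ∈ ℝ^{n×n} diagonal, define the damping power P_D = D_D(ω_r − dθ_s/dt) where θ_r, P_s are differentiable functions of time, ω_r = dθ_r/dt, and θ_s(t) = L_s⁻¹ D_B θ_r(t) − L_s⁻¹ P_s(t). Let Γ = D_D D_B⁻¹. Then P_D(t) = Γ · d/dt [ (D_B − D_B L_s⁻¹ D_B) θ_r(t) + D_B L_s⁻¹ P_s(t) ], i.e., P_D = Γ dP_r/dt where P_r is the rotor net power. -/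
open Matrix

lemma deriv_mulVec {n : ℕ} (M : Matrix (Fin n) (Fin n) ℝ) (f : ℝ → (Fin n → ℝ))
    (hf : Differentiable ℝ f) (t : ℝ) :
    deriv (fun s => M *ᵥ f s) t = M *ᵥ deriv f t := by
  have h := (((M.mulVecLin).toContinuousLinearMap).hasFDerivAt.comp t
    (hf t).hasFDerivAt).hasDerivAt
  have h2 : HasDerivAt (fun s => M *ᵥ f s) (M *ᵥ fderiv ℝ f t 1) t := by
    simpa [Function.comp_def] using h
  rw [h2.deriv, ← fderiv_apply_one_eq_deriv]

lemma diff_mulVec {n : ℕ} (M : Matrix (Fin n) (Fin n) ℝ) (f : ℝ → (Fin n → ℝ))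
    (hf : Differentiable ℝ f) : Differentiable ℝ (fun s => M *ᵥ f s) :=
  ((M.mulVecLin).toContinuousLinearMap).differentiable.comp hf

/-- Multi-machine damper winding model: with `θ_s(t) = L_s⁻¹ D_B θ_r(t) − L_s⁻¹ P_s(t)`,
`P_D = D_D(ω_r − dθ_s/dt)` where `ω_r = dθ_r/dt`, and `Γ = D_D D_B⁻¹`, the damping
power satisfies `P_D = Γ dP_r/dt` where
`P_r = (D_B − D_B L_s⁻¹ D_B) θ_r + D_B L_s⁻¹ P_s`. -/
theorem stmt_19 (n : ℕ) (DB DD Γ Ls : Matrix (Fin n) (Fin n) ℝ)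
    (dB dD : Fin n → ℝ) (hDBdiag : DB = Matrix.diagonal dB) (hDDdiag : DD = Matrix.diagonal dD)
    (hDB : IsUnit DB) (hLs : IsUnit Ls) (hΓ : Γ = DD * DB⁻¹)
    (θr Ps : ℝ → (Fin n → ℝ)) (hθr : Differentiable ℝ θr) (hPs : Differentiable ℝ Ps)
    (θs PD Pr : ℝ → (Fin n → ℝ))
    (hθs : ∀ t, θs t = (Ls⁻¹ * DB) *ᵥ θr t - Ls⁻¹ *ᵥ Ps t)
    (hPr : ∀ t, Pr t = (DB - DB * Ls⁻¹ * DB) *ᵥ θr t + (DB * Ls⁻¹) *ᵥ Ps t)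
    (hPD : ∀ t, PD t = DD *ᵥ (deriv θr t - deriv θs t)) :
    ∀ t, PD t = Γ *ᵥ deriv Pr t := by
  intro t
  have hiDB : DB⁻¹ * DB = 1 := nonsing_inv_mul DB ((isUnit_iff_isUnit_det DB).mp hDB)
  have hθs' : deriv θs t = (Ls⁻¹ * DB) *ᵥ deriv θr t - Ls⁻¹ *ᵥ deriv Ps t := by
    have : θs = fun s => (Ls⁻¹ * DB) *ᵥ θr s - Ls⁻¹ *ᵥ Ps s := funext hθs
    rw [this, deriv_fun_sub ((diff_mulVec _ _ hθr) t) ((diff_mulVec _ _ hPs) t),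
      deriv_mulVec _ _ hθr, deriv_mulVec _ _ hPs]
  have hPr' : deriv Pr t = (DB - DB * Ls⁻¹ * DB) *ᵥ deriv θr t + (DB * Ls⁻¹) *ᵥ deriv Ps t := by
    have : Pr = fun s => (DB - DB * Ls⁻¹ * DB) *ᵥ θr s + (DB * Ls⁻¹) *ᵥ Ps s := funext hPr
    rw [this, deriv_fun_add ((diff_mulVec _ _ hθr) t) ((diff_mulVec _ _ hPs) t),
      deriv_mulVec _ _ hθr, deriv_mulVec _ _ hPs]
  rw [hPD, hθs', hPr']
  have e1 : DD * DB⁻¹ * DB = DD := by rw [mul_assoc, hiDB, mul_one]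
  have e2 : DD * DB⁻¹ * (DB * Ls⁻¹ * DB) = DD * (Ls⁻¹ * DB) := by
    rw [mul_assoc DB, ← mul_assoc (DD * DB⁻¹), e1]
  have e3 : DD * DB⁻¹ * (DB * Ls⁻¹) = DD * Ls⁻¹ := by rw [← mul_assoc, e1]
  rw [hΓ, mulVec_add, mulVec_mulVec, mulVec_mulVec, mul_sub, e1, e2, e3]
  simp only [mulVec_sub, sub_mulVec, mulVec_mulVec, ← mul_assoc]
  abel
end
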